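/- Let (Γ, {F_α}_{α∈A}) be a group with Frobenii, and let ℛ = {ρ_λ}_{λ∈Λ} and ℛ' = {ρ'_λ}_{λ∈Λ} be two compatible systems of rank n semisimple representations of Γ defined over a number field E, admitting a common witnessing subset 𝒳 ⊂ A×Λ for the compatibility conditions of both systems. If ρ_{λ_0} ≅ ρ'_{λ_0} for some λ_0 ∈ Λ, then ρ_λ ≅ ρ'_λ for every λ ∈ Λ. -/

import Mathlib

/-!
Formalization of statements from "Independence of Algebraic Monodromy Groups in
Compatible Systems" by F. Amadio Guidi.

Linear algebraic subgroups of `GL_n` over a field `k` are encoded through their sets of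
`k`-points together with base-change operations given by the common zero locus (in any
extension) of all polynomials over `k` vanishing on the set; connectedness is taken for
the Zariski topology, reductivity via semisimplicity of the tautological representation
over an algebraic closure (which characterizes it in characteristic zero), and tori via
geometric diagonalizability.
-/

set_option maxHeartbeats 1600000

noncomputable section

open IsDedekindDomain NumberField MvPolynomial

namespace Paper

/-! ### Dirichlet density -/

/-- A set `S` of natural numbers (thought of as a set of rational primes) has Dirichlet
density one: `(∑_{p ∈ S prime} p^{-s}) / log (1/(s-1)) → 1` as `s → 1⁺`. -/
def DirichletDensityOne (S : Set ℕ) : Prop :=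
  Filter.Tendsto
    (fun s : ℝ =>
      (∑' p : {p : ℕ // p ∈ S ∧ p.Prime}, ((p : ℕ) : ℝ) ^ (-s)) / Real.log ((s - 1)⁻¹))
    (nhdsWithin 1 (Set.Ioi 1)) (nhds 1)

/-! ### Places of number fields -/

/-- The finite places of a number field: the height one primes of its ring of integers. -/
abbrev Places (K : Type) [Field K] [NumberField K] := HeightOneSpectrum (𝓞 K)

/-- The completion of a number field at a finite place. -/
abbrev Kv (K : Type) [Field K] [NumberField K] (v : Places K) : Type := v.adicCompletion K

/-- The residue characteristic of a finite place. -/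
def resChar (K : Type) [Field K] [NumberField K] (v : Places K) : ℕ :=
  ringChar (𝓞 K ⧸ v.asIdeal)

/-- A set of finite places of a number field has residual Dirichlet density one if the
set of residue characteristics of its members has Dirichlet density one. -/
def ResidualDensityOne {K : Type} [Field K] [NumberField K] (Λ : Set (Places K)) : Prop :=
  DirichletDensityOne {p | ∃ v ∈ Λ, resChar K v = p}

/-- The place `w` of `L` lies above the place `v` of `E`, relative to the embedding
`g : E →+* L`. -/
def LiesAboveVia {E L : Type} [Field E] [NumberField E] [Field L] [NumberField L]
    (g : E →+* L) (w : Places L) (v : Places E) : Prop :=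
  w.asIdeal.comap (NumberField.RingOfIntegers.mapRingHom g) = v.asIdeal

/-! ### Linear algebraic subgroups of `GL_n`, via points and vanishing ideals -/

/-- `GL_n` over a commutative ring. -/
abbrev GLn (n : ℕ) (R : Type) [CommRing R] := GL (Fin n) R

/-- The functorial map `GL_n(R) → GL_n(S)` induced by a ring homomorphism. -/
def mapGL {n : ℕ} {R S : Type} [CommRing R] [CommRing S] (f : R →+* S) :
    GLn n R →* GLn n S :=
  Units.map (RingHom.toMonoidHom (RingHom.mapMatrix f))

/-- The matrix coordinates of an element of `GL_n`. -/
def gval {n : ℕ} {R : Type} [CommRing R] (g : GLn n R) : Fin n × Fin n → R :=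
  fun p => (g : Matrix (Fin n) (Fin n) R) p.1 p.2

/-- Given `S ⊆ GL_n(k)` and a ring homomorphism `f : k → K`, the set of `K`-points of the
base change along `f` of the Zariski closure of `S`: the common zero locus in `GL_n(K)` of
all polynomials over `k` vanishing on `S`. -/
def zeroExt {n : ℕ} {k K : Type} [CommRing k] [CommRing K] (f : k →+* K)
    (S : Set (GLn n k)) : Set (GLn n K) :=
  {h | ∀ P : MvPolynomial (Fin n × Fin n) k,
    (∀ g ∈ S, eval (gval g) P = 0) → eval (gval h) (MvPolynomial.map f P) = 0}

/-- The Zariski topology on `GL_n(k)`. -/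
def glTop (n : ℕ) (k : Type) [CommRing k] : TopologicalSpace (GLn n k) :=
  TopologicalSpace.generateFrom
    {U | ∃ P : MvPolynomial (Fin n × Fin n) k, U = {g | eval (gval g) P ≠ 0}}

/-- The algebraic monodromy group of a representation: the Zariski closure of its image. -/
def monodromyGroup {n : ℕ} {Γ : Type} [Group Γ] {k : Type} [Field k]
    (ρ : Γ →* GLn n k) : Set (GLn n k) :=
  zeroExt (RingHom.id k) (Set.range ρ)

/-- The neutral component `G_λ°` of the algebraic monodromy group: the connected component
of the identity for the Zariski topology. -/
def monodromyGroup₀ {n : ℕ} {Γ : Type} [Group Γ] {k : Type} [Field k]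
    (ρ : Γ →* GLn n k) : Set (GLn n k) :=
  letI := glTop n k
  connectedComponentIn (monodromyGroup ρ) 1

/-- Two closed subvarieties of `GL_n`, defined over subfields `k₁, k₂` of `K` via `f₁, f₂`,
are conjugate over `K`: some `g ∈ GL_n(K)` conjugates the geometric points of one base
change onto those of the other. -/
def ConjOverVia {n : ℕ} {k₁ k₂ K : Type} [Field k₁] [Field k₂] [Field K]
    (f₁ : k₁ →+* K) (f₂ : k₂ →+* K) (S₁ : Set (GLn n k₁)) (S₂ : Set (GLn n k₂)) : Prop :=
  ∃ g : GLn n K,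
    (fun h => mapGL (algebraMap K (AlgebraicClosure K)) g * h *
        (mapGL (algebraMap K (AlgebraicClosure K)) g)⁻¹) ''
      zeroExt ((algebraMap K (AlgebraicClosure K)).comp f₁) S₁ =
    zeroExt ((algebraMap K (AlgebraicClosure K)).comp f₂) S₂

/-! ### Irreducibility, semisimplicity, reductivity -/

/-- A subset of `GL_n(k)` stabilizes a submodule of `k^n`. -/
def StabSet {n : ℕ} {k : Type} [CommRing k] (S : Set (GLn n k))
    (W : Submodule k (Fin n → k)) : Prop :=
  ∀ g ∈ S, ∀ x ∈ W, Matrix.mulVec (g : Matrix (Fin n) (Fin n) k) x ∈ W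

/-- A subset of `GL_n(k)` acts irreducibly on `k^n`. -/
def IrreducibleSet {n : ℕ} {k : Type} [Field k] (S : Set (GLn n k)) : Prop :=
  (⊥ : Submodule k (Fin n → k)) ≠ ⊤ ∧ ∀ W, StabSet S W → W = ⊥ ∨ W = ⊤

/-- A subset of `GL_n(k)` acts semisimply on `k^n`. -/
def SemisimpleSet {n : ℕ} {k : Type} [Field k] (S : Set (GLn n k)) : Prop :=
  ∀ W, StabSet S W → ∃ W', StabSet S W' ∧ IsCompl W W'

/-- Base change of points to the algebraic closure. -/
def toBar {n : ℕ} {k : Type} [Field k] : GLn n k →* GLn n (AlgebraicClosure k) :=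
  mapGL (algebraMap k (AlgebraicClosure k))

/-- A representation is absolutely irreducible if its image acts irreducibly after base
change to an algebraic closure. -/
def AbsIrreducibleRep {n : ℕ} {Γ : Type} [Group Γ] {k : Type} [Field k]
    (ρ : Γ →* GLn n k) : Prop :=
  IrreducibleSet (Set.range (fun γ => toBar (ρ γ)))

/-- A representation is semisimple: its image acts semisimply after base change to an
algebraic closure. -/
def SemisimpleRep {n : ℕ} {Γ : Type} [Group Γ] {k : Type} [Field k]
    (ρ : Γ →* GLn n k) : Prop :=
  SemisimpleSet (Set.range (fun γ => toBar (ρ γ)))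

/-- Absolute Lie-irreducibility: the restriction to every open subgroup is absolutely
irreducible. -/
def AbsLieIrreducibleRep {n : ℕ} {Γ : Type} [Group Γ] [TopologicalSpace Γ] {k : Type}
    [Field k] (ρ : Γ →* GLn n k) : Prop :=
  ∀ Δ : Subgroup Γ, IsOpen (Δ : Set Γ) →
    IrreducibleSet ((fun γ => toBar (ρ γ)) '' (Δ : Set Γ))

/-- Lie-irreducibility: the restriction to every open subgroup is irreducible. -/
def LieIrreducibleRep {n : ℕ} {Γ : Type} [Group Γ] [TopologicalSpace Γ] {k : Type}
    [Field k] (ρ : Γ →* GLn n k) : Prop :=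
  ∀ Δ : Subgroup Γ, IsOpen (Δ : Set Γ) →
    IrreducibleSet ((fun γ => ρ γ) '' (Δ : Set Γ))

/-- Isomorphism of two `GL_n(k)`-valued representations over the algebraic closure. -/
def IsoOverBar {n : ℕ} {Γ : Type} [Group Γ] {k : Type} [Field k]
    (ρ₁ ρ₂ : Γ →* GLn n k) : Prop :=
  ∃ P : GLn n (AlgebraicClosure k), ∀ γ, toBar (ρ₂ γ) = P * toBar (ρ₁ γ) * P⁻¹

/-! ### Predicates on algebraic subgroups -/

/-- `S` is Zariski closed in `GL_n(k)`. -/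
def IsZClosed {n : ℕ} {k : Type} [Field k] (S : Set (GLn n k)) : Prop :=
  zeroExt (RingHom.id k) S = S

/-- A subset of a group closed under the group operations. -/
def MulClosedSet {G : Type} [Group G] (S : Set G) : Prop :=
  (1 : G) ∈ S ∧ (∀ a ∈ S, ∀ b ∈ S, a * b ∈ S) ∧ ∀ a ∈ S, a⁻¹ ∈ S

/-- `S ⊆ GL_n(k)` is an algebraic subgroup: Zariski closed, with points over every field
extension forming a subgroup. -/
def IsAlgSubgroup {n : ℕ} {k : Type} [Field k] (S : Set (GLn n k)) : Prop :=
  IsZClosed S ∧ ∀ (K : Type) [Field K], ∀ f : k →+* K, MulClosedSet (zeroExt f S)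

/-- `S` is (geometrically) connected. -/
def GeomConnected {n : ℕ} {k : Type} [Field k] (S : Set (GLn n k)) : Prop :=
  letI := glTop n (AlgebraicClosure k)
  IsConnected (zeroExt (algebraMap k (AlgebraicClosure k)) S)

/-- `S ⊆ GL_n(k)` is reductive: its geometric points act semisimply on the standard
representation (this characterizes reductivity in characteristic zero). -/
def ReductiveSet {n : ℕ} {k : Type} [Field k] (S : Set (GLn n k)) : Prop :=
  SemisimpleSet (zeroExt (algebraMap k (AlgebraicClosure k)) S)

/-- A set of diagonal elements of `GL_n`. -/
def DiagSet {n : ℕ} {k : Type} [CommRing k] (T : Set (GLn n k)) : Prop :=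
  ∀ h ∈ T, ∀ i j : Fin n, i ≠ j → (h : Matrix (Fin n) (Fin n) k) i j = 0

/-- `T ⊆ GL_n(k)` is a torus: a connected algebraic subgroup, diagonalizable over the
algebraic closure. -/
def IsTorus {n : ℕ} {k : Type} [Field k] (T : Set (GLn n k)) : Prop :=
  IsAlgSubgroup T ∧ GeomConnected T ∧
    ∃ g : GLn n (AlgebraicClosure k),
      DiagSet ((fun h => g * h * g⁻¹) '' zeroExt (algebraMap k (AlgebraicClosure k)) T)

/-- `T` is a torus split over `k`: it is diagonalizable by an element of `GL_n(k)`. -/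
def IsSplitTorus {n : ℕ} {k : Type} [Field k] (T : Set (GLn n k)) : Prop :=
  IsTorus T ∧ ∃ g : GLn n k, DiagSet ((fun h => g * h * g⁻¹) '' T)

/-- `T` is a maximal torus in `S`. -/
def IsMaximalTorusIn {n : ℕ} {k : Type} [Field k] (T S : Set (GLn n k)) : Prop :=
  IsTorus T ∧ T ⊆ S ∧ ∀ T', IsTorus T' → T ⊆ T' → T' ⊆ S → T' = T

/-- `S` is a connected reductive algebraic subgroup of `GL_n(k)`. -/
def IsConnReductive {n : ℕ} {k : Type} [Field k] (S : Set (GLn n k)) : Prop :=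
  IsAlgSubgroup S ∧ GeomConnected S ∧ ReductiveSet S

/-- `S` is a split connected reductive algebraic subgroup of `GL_n(k)`. -/
def IsSplitConnReductive {n : ℕ} {k : Type} [Field k] (S : Set (GLn n k)) : Prop :=
  IsConnReductive S ∧ ∃ T, IsMaximalTorusIn T S ∧ IsSplitTorus T

/-! ### Compatible systems -/

/-- Definition 1.1 of the paper: a compatible system of rank `n` continuous representations
of a group `Γ` with Frobenius elements `Fr : A → Γ`, with coefficients in the number field
`E`, indexed by the set `Λ` of finite places of `E`, with witnessing set `X ⊆ A × Λ`. -/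
structure IsCompatibleSystem {Γ A : Type} [Group Γ] [TopologicalSpace Γ] (Fr : A → Γ)
    (E : Type) [Field E] [NumberField E] (n : ℕ) (Λ : Set (Places E))
    (ρ : ∀ v : Places E, Γ →* GLn n (Kv E v)) (X : Set (A × Places E)) : Prop where
  subset : ∀ p ∈ X, p.2 ∈ Λ
  continuous : ∀ v ∈ Λ, Continuous (ρ v)
  cofinite : ∀ α : A, {v | v ∈ Λ ∧ (α, v) ∉ X}.Finite
  charpoly_indep : ∀ α : A, ∃ q : Polynomial E, ∀ v : Places E, (α, v) ∈ X →
    Matrix.charpoly ((ρ v (Fr α) : GLn n (Kv E v)) : Matrix (Fin n) (Fin n) (Kv E v)) =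
      q.map (algebraMap E (Kv E v))
  frob_dense : ∀ (m : ℕ) (vs : Fin m → Places E), (∀ i, vs i ∈ Λ) →
    Dense (Fr '' {α | ∀ i, (α, vs i) ∈ X})

/-- An Artin representation: one whose kernel contains an open normal subgroup, i.e. which
factors through a finite quotient. -/
def IsArtinRep {Γ : Type} [Group Γ] [TopologicalSpace Γ] {d : ℕ} {k : Type} [Field k]
    (ω : Γ →* GLn d k) : Prop :=
  ∃ N : Subgroup Γ, N.Normal ∧ IsOpen (N : Set Γ) ∧ N ≤ ω.ker

/-! ### Induced representations and Lie-irreducible decompositions -/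

open Classical in
/-- The matrix of the induced representation `Ind_H^Γ (σ ⊗ ω)` at `γ`, with respect to a
transversal `t` of `H` in `Γ`. -/
def indMat {Γ : Type} [Group Γ] {F : Type} [Field F] (H : Subgroup Γ) (t : Γ ⧸ H → Γ)
    {m d : ℕ} (σ : ↥H →* GLn m F) (ω : ↥H →* GLn d F) (γ : Γ) :
    Matrix ((Γ ⧸ H) × (Fin m × Fin d)) ((Γ ⧸ H) × (Fin m × Fin d)) F :=
  fun p q =>
    if h : (t p.1)⁻¹ * γ * t q.1 ∈ H then
      ((σ ⟨(t p.1)⁻¹ * γ * t q.1, h⟩ : GLn m F) : Matrix (Fin m) (Fin m) F) p.2.1 q.2.1 *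
      ((ω ⟨(t p.1)⁻¹ * γ * t q.1, h⟩ : GLn d F) : Matrix (Fin d) (Fin d) F) p.2.2 q.2.2
    else 0

/-- The matrix-valued function `ρM` on `Γ` is isomorphic to `⊕ᵢ Ind_{Γᵢ}^Γ (σᵢ ⊗ ωᵢ)`:
for some transversals, some identification of the total index set with `Fin n` (which in
particular forces `∑ᵢ mᵢ dᵢ [Γ:Γᵢ] = n`), and some base change matrix `P`, the two matrix
representations agree. -/
def DecompIso {Γ : Type} [Group Γ] {F : Type} [Field F] {n kk : ℕ}
    (ρM : Γ → Matrix (Fin n) (Fin n) F) (Gi : Fin kk → Subgroup Γ) (mi di : Fin kk → ℕ)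
    (σ : ∀ i, ↥(Gi i) →* GLn (mi i) F) (ω : ∀ i, ↥(Gi i) →* GLn (di i) F) : Prop :=
  ∃ t : ∀ i, Γ ⧸ Gi i → Γ,
    (∀ i c, (QuotientGroup.mk (t i c) : Γ ⧸ Gi i) = c) ∧
    ∃ (e : (Σ i : Fin kk, (Γ ⧸ Gi i) × (Fin (mi i) × Fin (di i))) ≃ Fin n) (P : GLn n F),
      ∀ γ : Γ,
        ρM γ = (P : Matrix (Fin n) (Fin n) F) *
          (Matrix.reindex e e
            (Matrix.blockDiagonal' fun i => indMat (Gi i) (t i) (σ i) (ω i) γ)) *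
          ((P⁻¹ : GLn n F) : Matrix (Fin n) (Fin n) F)

/-- Definition 4.2 of the paper: the compatible system `ρ` admits a Lie-irreducible
decomposition over the finite extension `E'` of `E`: there are open subgroups `Γᵢ ≤ Γ`,
compatible systems `σᵢ` of absolutely Lie-irreducible representations of `Γᵢ` with
coefficients in `E'` indexed by residual-density-one sets `Λᵢ` of places of `E'` (with the
Frobenii of `Γᵢ` being those Frobenii of `Γ` lying in `Γᵢ`), and Artin representations
`ωᵢ` of `Γᵢ`, with `ρ_λ ≅ ⊕ᵢ Ind_{Γᵢ}^Γ (σ_{i,λ} ⊗ ωᵢ)` over `E'` for every place of `E'`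
in `⋂ᵢ Λᵢ` lying above a place of `Λ`. -/
def HasLieIrredDecomp {Γ A : Type} [Group Γ] [TopologicalSpace Γ] (Fr : A → Γ)
    (E : Type) [Field E] [NumberField E] (n : ℕ) (Λ : Set (Places E))
    (ρ : ∀ v : Places E, Γ →* GLn n (Kv E v))
    (E' : Type) [Field E'] [NumberField E'] (g : E →+* E') : Prop :=
  ∃ (kk : ℕ) (Gi : Fin kk → Subgroup Γ) (mi di : Fin kk → ℕ)
    (Λi : Fin kk → Set (Places E'))
    (σ : ∀ i, ∀ w : Places E', ↥(Gi i) →* GLn (mi i) (Kv E' w))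
    (ω : ∀ i, ↥(Gi i) →* GLn (di i) E'),
    (∀ i, IsOpen ((Gi i : Set Γ))) ∧
    (∀ i, ResidualDensityOne (Λi i)) ∧
    (∀ i, ∃ Xi : Set ({α : A // Fr α ∈ Gi i} × Places E'),
      IsCompatibleSystem (fun α : {α : A // Fr α ∈ Gi i} => (⟨Fr α.1, α.2⟩ : ↥(Gi i)))
        E' (mi i) (Λi i) (σ i) Xi) ∧
    (∀ i, ∀ w ∈ Λi i, AbsLieIrreducibleRep (σ i w)) ∧
    (∀ i, IsArtinRep (ω i)) ∧
    (∀ v ∈ Λ, ∀ w : Places E', (∀ i, w ∈ Λi i) → LiesAboveVia g w v →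
      ∃ f : Kv E v →+* Kv E' w,
        f.comp (algebraMap E (Kv E v)) = (algebraMap E' (Kv E' w)).comp g ∧
        DecompIso (fun γ => ((mapGL f (ρ v γ) : GLn n (Kv E' w)) :
            Matrix (Fin n) (Fin n) (Kv E' w)))
          Gi mi di (fun i => σ i w) (fun i => (mapGL (algebraMap E' (Kv E' w))).comp (ω i)))

/-! ### Galois groups and Frobenius elements -/

/-- The absolute Galois group of `F` (automorphisms of an algebraic closure; for the
purposes of this paper this agrees with `Gal(F^sep/F)`), with its Krull topology. -/
abbrev Gal (F : Type) [Field F] := AlgebraicClosure F ≃ₐ[F] AlgebraicClosure F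

/-- `γ` is a geometric Frobenius element at the place of `F` given by the valuation
subring `v`: for some extension `A` of `v` to the algebraic closure, `γ⁻¹` is in the
decomposition group at `A` and induces the `#k(v)`-power (arithmetic Frobenius) map on
the residue field of `A`. -/
def IsGeomFrobAtVal (F : Type) [Field F] (γ : Gal F) (v : ValuationSubring F) : Prop :=
  ∃ A : ValuationSubring (AlgebraicClosure F),
    A.comap (algebraMap F (AlgebraicClosure F)) = v ∧
    ∃ h : γ⁻¹ ∈ A.decompositionSubgroup F,
      ∀ x : IsLocalRing.ResidueField A,
        MulSemiringAction.toRingAut (A.decompositionSubgroup F) (IsLocalRing.ResidueField A)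
          ⟨γ⁻¹, h⟩ x = x ^ Nat.card (IsLocalRing.ResidueField v)

/-- `γ` is a geometric Frobenius element at the finite place `v` of the number field `F`. -/
def IsGeomFrobAtPlace (F : Type) [Field F] [NumberField F] (γ : Gal F) (v : Places F) :
    Prop :=
  ∃ A : ValuationSubring (AlgebraicClosure F),
    A.comap (algebraMap F (AlgebraicClosure F)) = (v.valuation F).valuationSubring ∧
    ∃ h : γ⁻¹ ∈ A.decompositionSubgroup F,
      ∀ x : IsLocalRing.ResidueField A,
        MulSemiringAction.toRingAut (A.decompositionSubgroup F) (IsLocalRing.ResidueField A)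
          ⟨γ⁻¹, h⟩ x = x ^ Nat.card (𝓞 F ⧸ v.asIdeal)

end Paper

open Paper

/-!
Conjugate representations have equal traces, so `ρ_{λ₀}` and `ρ'_{λ₀}` have equal traces. The
trace of a Frobenius is a coefficient of its characteristic polynomial, which lies in `E` and
does not depend on the place; hence the traces of `ρ_λ` and `ρ'_λ` agree on the Frobenii common
to `λ₀` and `λ`, a dense set, and so on all of `Γ` by continuity. It remains to see that
semisimple representations in characteristic zero are determined by their traces
(Brauer–Nesbitt). For semisimple `B`-modules `M`, `N` and a simple `S ≤ M`, Jacobson density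
gives `b ∈ B` acting on `M × N` as the projection onto the `S`-isotypic component. Its trace on
`M` is nonzero, so its trace on `N` is nonzero too, whence `N` contains a copy of `S`; cancel
`S` and induct on the dimension.
-/

open LinearMap Module

section Isotypic

variable {B P : Type*} [Ring B] [AddCommGroup P] [Module B P]

instance IsSemisimpleModule.prod {N : Type*} [AddCommGroup N] [Module B N]
    [IsSemisimpleModule B P] [IsSemisimpleModule B N] : IsSemisimpleModule B (P × N) := by
  have := (IsSemisimpleModule.range (inl B P N)).sup (IsSemisimpleModule.range (inr B P N))
  rw [sup_range_inl_inr] at this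
  exact .congr Submodule.topEquiv.symm

theorem isCompl_sSup_isotypicComponents_diff [IsSemisimpleModule B P] {c : Submodule B P}
    (hc : c ∈ isotypicComponents B P) :
    IsCompl c (sSup (isotypicComponents B P \ {c})) := by
  refine ⟨sSupIndep_isotypicComponents B P hc, codisjoint_iff.mpr (top_unique ?_)⟩
  rw [← sSup_isotypicComponents B P, ← sSup_insert, Set.insert_sdiff_singleton]
  exact sSup_le_sSup (Set.subset_insert _ _)

theorem Submodule.commute_projection {C C' : Submodule B P} (h : IsCompl C C')
    {f : Module.End B P} (hC : C ≤ C.comap f) (hC' : C' ≤ C'.comap f) :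
    Commute (C.projection C' h) f := by
  rw [(isIdempotentElem_projection h).commute_iff, range_projection, ker_projection]
  exact ⟨hC, hC'⟩

theorem Submodule.IsFullyInvariant.exists_smul_eq_projection [IsSemisimpleModule B P]
    [Module.Finite (Module.End B P) P] {C C' : Submodule B P} (h : IsCompl C C')
    (hC : C.IsFullyInvariant) (hC' : C'.IsFullyInvariant) :
    ∃ b : B, ∀ x, b • x = C.projection C' h x := by
  let π : Module.End (Module.End B P) P :=
    { toFun := C.projection C' h
      map_add' := map_add _
      map_smul' f x := LinearMap.congr_fun (commute_projection h (hC f) (hC' f)).eq x }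
  obtain ⟨b, hb⟩ := Module.Finite.toModuleEnd_moduleEnd_surjective π
  exact ⟨b, fun x => LinearMap.congr_fun hb x⟩

theorem exists_smul_mem_and_smul_eq_self_of_mem_isotypicComponents [IsSemisimpleModule B P]
    [Module.Finite (Module.End B P) P] {c : Submodule B P} (hc : c ∈ isotypicComponents B P) :
    ∃ b : B, (∀ x, b • x ∈ c) ∧ ∀ x ∈ c, b • x = x := by
  have hcompl := isCompl_sSup_isotypicComponents_diff hc
  obtain ⟨b, hb⟩ := Submodule.IsFullyInvariant.exists_smul_eq_projection hcompl
    (.of_mem_isotypicComponents hc)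
    ((fullyInvariantSubmodule B P).sSupClosed fun _ h => .of_mem_isotypicComponents h.1)
  refine ⟨b, fun x => hb x ▸ Submodule.projection_apply_mem hcompl x, fun x hx => ?_⟩
  rw [hb, Submodule.projection_apply_of_mem_left hcompl hx]

end Isotypic

section BrauerNesbitt

variable (K : Type*) {B : Type*} [Field K] [Ring B] [Algebra K B]
variable {M N : Type*} [AddCommGroup M] [Module B M] [Module K M] [IsScalarTower K B M]
  [AddCommGroup N] [Module B N] [Module K N] [IsScalarTower K B N]

instance Submodule.finiteDimensional_of_isScalarTower [FiniteDimensional K M]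
    (p : Submodule B M) : FiniteDimensional K p :=
  .of_injective (p.subtype.restrictScalars K) p.injective_subtype

theorem trace_toLinearMap_eq_of_linearEquiv (e : M ≃ₗ[B] N) (b : B) :
    trace K M (DistribSMul.toLinearMap K M b) = trace K N (DistribSMul.toLinearMap K N b) := by
  rw [← trace_conj' _ (e.restrictScalars K)]
  congr 1
  ext x
  simp

theorem trace_toLinearMap_prod [FiniteDimensional K M] [FiniteDimensional K N] (b : B) :
    trace K (M × N) (DistribSMul.toLinearMap K (M × N) b) =
      trace K M (DistribSMul.toLinearMap K M b) + trace K N (DistribSMul.toLinearMap K N b) := by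
  rw [← trace_prodMap']
  rfl

theorem trace_toLinearMap_eq_add_of_isCompl [FiniteDimensional K M] {p q : Submodule B M}
    (h : IsCompl p q) (b : B) :
    trace K M (DistribSMul.toLinearMap K M b) =
      trace K p (DistribSMul.toLinearMap K p b) + trace K q (DistribSMul.toLinearMap K q b) := by
  rw [← trace_toLinearMap_prod, trace_toLinearMap_eq_of_linearEquiv K (p.prodEquivOfIsCompl q h)]

variable (M) in
theorem trace_toLinearMap_one [FiniteDimensional K M] :
    trace K M (DistribSMul.toLinearMap K M (1 : B)) = finrank K M := by
  rw [← trace_id]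
  congr 1
  ext x
  simp

theorem exists_submodule_linearEquiv_of_trace_toLinearMap_eq [CharZero K] [FiniteDimensional K M]
    [FiniteDimensional K N] [IsSemisimpleModule B M] [IsSemisimpleModule B N]
    (htr : ∀ b : B,
      trace K M (DistribSMul.toLinearMap K M b) = trace K N (DistribSMul.toLinearMap K N b))
    (S : Submodule B M) [IsSimpleModule B S] :
    ∃ T : Submodule B N, Nonempty (T ≃ₗ[B] S) := by
  have : Module.Finite (Module.End B (M × N)) (M × N) := .of_restrictScalars_finite K _ _
  let eS := S.equivMapOfInjective _ (inl_injective (R := B) (M := M) (M₂ := N))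
  have := IsSimpleModule.congr eS.symm
  set c := isotypicComponent B (M × N) (S.map (inl B M N))
  obtain ⟨b, hbc, hb⟩ :=
    exists_smul_mem_and_smul_eq_self_of_mem_isotypicComponents (c := c) ⟨_, inferInstance, rfl⟩
  have hidem : ∀ x : M × N, b • b • x = b • x := fun x => hb _ (hbc x)
  have hidemM : IsIdempotentElem (DistribSMul.toLinearMap K M b) :=
    LinearMap.ext fun m => congrArg Prod.fst (hidem (m, 0))
  have hidemN : IsIdempotentElem (DistribSMul.toLinearMap K N b) :=
    LinearMap.ext fun y => congrArg Prod.snd (hidem (0, y))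
  -- `b` is idempotent and fixes the copy of `S` in `M`: its trace on `M`, hence on `N`, is nonzero.
  have hbN : DistribSMul.toLinearMap K N b ≠ 0 := by
    rw [Ne, ← hidemN.trace_eq_zero_iff, ← htr, hidemM.trace_eq_zero_iff]
    obtain ⟨s, hs, hs0⟩ := Submodule.exists_mem_ne_zero_of_ne_bot
      ((Submodule.nontrivial_iff_ne_bot).mp (IsSimpleModule.nontrivial B S))
    intro h0
    have hsc : (s, (0 : N)) ∈ c := Submodule.le_isotypicComponent _ ⟨s, hs, rfl⟩
    have hbs : b • s = s := by simpa using congrArg Prod.fst (hb _ hsc)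
    exact hs0 (hbs ▸ LinearMap.congr_fun h0 s)
  obtain ⟨y, hy⟩ := not_forall.mp fun h => hbN (LinearMap.ext h)
  have hne : c.comap (inr B M N) ≠ ⊥ := by
    refine (Submodule.ne_bot_iff _).mpr ⟨b • y, ?_, hy⟩
    simpa using hbc (0, y)
  obtain ⟨T, hTc, _⟩ := (IsSemisimpleModule.eq_bot_or_exists_simple_le _).resolve_left hne
  let eT := T.equivMapOfInjective _ (inr_injective (R := B) (M := M) (M₂ := N))
  have := IsSimpleModule.congr eT.symm
  obtain ⟨e⟩ := isIsotypicOfType_submodule_iff.mp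
    (IsIsotypicOfType.isotypicComponent B (M × N) _) _ (Submodule.map_le_iff_le_comap.mpr hTc)
  exact ⟨T, ⟨eT.trans (e.trans eS.symm)⟩⟩

theorem nonempty_linearEquiv_of_trace_toLinearMap_eq [CharZero K] [FiniteDimensional K M]
    [FiniteDimensional K N] [IsSemisimpleModule B M] [IsSemisimpleModule B N]
    (htr : ∀ b : B,
      trace K M (DistribSMul.toLinearMap K M b) = trace K N (DistribSMul.toLinearMap K N b)) :
    Nonempty (M ≃ₗ[B] N) := by
  induction hd : finrank K M using Nat.strong_induction_on generalizing M N with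
  | _ d ih =>
  rcases subsingleton_or_nontrivial M with _ | _
  · have hN : (finrank K N : K) = 0 := by
      rw [← trace_toLinearMap_one (B := B) K N, ← htr, trace_toLinearMap_one,
        finrank_zero_of_subsingleton, Nat.cast_zero]
    have := Module.finrank_zero_iff.mp (Nat.cast_eq_zero.mp hN)
    exact ⟨LinearEquiv.ofSubsingleton M N⟩
  obtain ⟨S, _⟩ := IsSemisimpleModule.exists_simple_submodule B M
  obtain ⟨T, ⟨e⟩⟩ := exists_submodule_linearEquiv_of_trace_toLinearMap_eq K htr S
  obtain ⟨M', hM'⟩ := exists_isCompl S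
  obtain ⟨N', hN'⟩ := exists_isCompl T
  have htr' : ∀ b : B, trace K M' (DistribSMul.toLinearMap K M' b) =
      trace K N' (DistribSMul.toLinearMap K N' b) := by
    intro b
    have := htr b
    rw [trace_toLinearMap_eq_add_of_isCompl K hM', trace_toLinearMap_eq_add_of_isCompl K hN',
      trace_toLinearMap_eq_of_linearEquiv K e] at this
    exact add_left_cancel this
  have hlt : finrank K M' < d := by
    have := ((S.prodEquivOfIsCompl M' hM').restrictScalars K).finrank_eq
    have := IsSimpleModule.nontrivial B S
    have := Module.finrank_pos (R := K) (M := S)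
    rw [Module.finrank_prod] at *
    omega
  obtain ⟨e'⟩ := ih _ hlt htr' rfl
  exact ⟨(S.prodEquivOfIsCompl M' hM').symm ≪≫ₗ e.symm.prodCongr e' ≪≫ₗ
    T.prodEquivOfIsCompl N' hN'⟩

end BrauerNesbitt

theorem Subrepresentation.isCompl_of_isCompl_toSubmodule {k G V : Type*} [Field k] [Monoid G]
    [AddCommGroup V] [Module k V] {ρ : Representation k G V} {σ τ : Subrepresentation ρ}
    (h : IsCompl σ.toSubmodule τ.toSubmodule) : IsCompl σ τ := by
  constructor
  · rw [disjoint_iff]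
    apply Subrepresentation.toSubmodule_injective
    rw [Subrepresentation.toSubmodule_inf, h.inf_eq_bot]
    rfl
  · rw [codisjoint_iff]
    apply Subrepresentation.toSubmodule_injective
    rw [Subrepresentation.toSubmodule_sup, h.sup_eq_top]
    rfl

namespace Representation

variable {k G V W : Type*} [Field k] [Monoid G] [AddCommGroup V] [Module k V]
  [AddCommGroup W] [Module k W]

theorem trace_toLinearMap_asModule (ρ : Representation k G V) (b : MonoidAlgebra k G) :
    trace k ρ.asModule (DistribSMul.toLinearMap k ρ.asModule b) =
      trace k V (ρ.asAlgebraHom b) := by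
  rw [← trace_conj' _ ρ.asModuleEquiv]
  rfl

theorem trace_asAlgebraHom_eq_of_character_eq {ρ : Representation k G V}
    {σ : Representation k G W} (h : ρ.character = σ.character) (b : MonoidAlgebra k G) :
    trace k V (ρ.asAlgebraHom b) = trace k W (σ.asAlgebraHom b) := by
  induction b using MonoidAlgebra.induction_linear with
  | zero => simp
  | add x y hx hy => simp [hx, hy]
  | single g a =>
    simp only [asAlgebraHom_single, map_smul]
    exact congrArg (a • ·) (congrFun h g)

def Equiv.ofAsModule {ρ : Representation k G V} {σ : Representation k G W}
    (e : ρ.asModule ≃ₗ[MonoidAlgebra k G] σ.asModule) : ρ.Equiv σ :=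
  .mk (ρ.asModuleEquiv.symm ≪≫ₗ e.restrictScalars k ≪≫ₗ σ.asModuleEquiv) fun g => by
    ext x
    change σ.asModuleEquiv (e (ρ.asModuleEquiv.symm (ρ g x))) =
      σ g (σ.asModuleEquiv (e (ρ.asModuleEquiv.symm x)))
    rw [asModuleEquiv_symm_map_rho, map_smul, asModuleEquiv_map_smul, asAlgebraHom_of]

theorem nonempty_equiv_of_character_eq [CharZero k] [FiniteDimensional k V]
    [FiniteDimensional k W] {ρ : Representation k G V} {σ : Representation k G W}
    [IsSemisimpleRepresentation ρ] [IsSemisimpleRepresentation σ]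
    (h : ρ.character = σ.character) : Nonempty (ρ.Equiv σ) := by
  rw [isSemisimpleRepresentation_iff_isSemisimpleModule_asModule] at *
  obtain ⟨e⟩ := nonempty_linearEquiv_of_trace_toLinearMap_eq (M := ρ.asModule)
    (N := σ.asModule) k fun b => by
    rw [trace_toLinearMap_asModule, trace_toLinearMap_asModule,
      trace_asAlgebraHom_eq_of_character_eq h]
  exact ⟨.ofAsModule e⟩

variable {ι : Type*} [Fintype ι] [DecidableEq ι]

def ofGL (r : G →* GL ι k) : Representation k G (ι → k) :=
  (Matrix.toLinAlgEquiv' : Matrix ι ι k ≃ₐ[k] Module.End k (ι → k)).toMonoidHom.comp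
    ((Units.coeHom _).comp r)

theorem character_ofGL (r : G →* GL ι k) (g : G) :
    (ofGL r).character g = (r g : Matrix ι ι k).trace :=
  Matrix.trace_toLin'_eq _

theorem Equiv.exists_conj_ofGL {r r' : G →* GL ι k} (φ : (ofGL r).Equiv (ofGL r')) :
    ∃ P : GL ι k, ∀ g, r' g = P * r g * P⁻¹ := by
  refine ⟨Matrix.GeneralLinearGroup.toLin.symm
    (LinearMap.GeneralLinearGroup.ofLinearEquiv φ.toLinearEquiv), fun g => ?_⟩
  apply Matrix.GeneralLinearGroup.toLin.injective
  refine Units.ext (LinearMap.ext fun x => ?_)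
  simp only [map_mul, map_inv, MulEquiv.apply_symm_apply, Units.val_mul, Module.End.mul_apply,
    LinearMap.GeneralLinearGroup.coe_ofLinearEquiv]
  calc _ = ofGL r' g (φ.toLinearEquiv (φ.toLinearEquiv.symm x)) := by
        rw [LinearEquiv.apply_symm_apply]; rfl
    _ = _ := (IntertwiningMap.isIntertwining _ _ φ.toIntertwiningMap g _).symm

end Representation

namespace Paper

open Representation

variable {n : ℕ} {K : Type} [Field K]

theorem isSemisimpleRepresentation_ofGL {G : Type*} [Monoid G] {r : G →* GLn n K}
    (h : SemisimpleSet (Set.range r)) : IsSemisimpleRepresentation (ofGL r) := by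
  refine ⟨fun σ => ?_⟩
  obtain ⟨W', hW', hcompl⟩ := h σ.toSubmodule (by
    rintro _ ⟨g, rfl⟩ x hx
    exact σ.apply_mem_toSubmodule g hx)
  exact ⟨⟨W', fun g x hx => hW' _ ⟨g, rfl⟩ x hx⟩,
    Subrepresentation.isCompl_of_isCompl_toSubmodule hcompl⟩

theorem exists_conj_of_trace_eq [CharZero K] {G : Type*} [Monoid G] {r r' : G →* GLn n K}
    (hr : SemisimpleSet (Set.range r)) (hr' : SemisimpleSet (Set.range r'))
    (h : ∀ g, (r g : Matrix (Fin n) (Fin n) K).trace = (r' g : Matrix (Fin n) (Fin n) K).trace) :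
    ∃ P : GLn n K, ∀ g, r' g = P * r g * P⁻¹ := by
  have := isSemisimpleRepresentation_ofGL hr
  have := isSemisimpleRepresentation_ofGL hr'
  obtain ⟨φ⟩ := nonempty_equiv_of_character_eq (ρ := ofGL r) (σ := ofGL r')
    (funext fun g => by rw [character_ofGL, character_ofGL, h])
  exact φ.exists_conj_ofGL

theorem trace_toBar (g : GLn n K) :
    (toBar g : Matrix (Fin n) (Fin n) (AlgebraicClosure K)).trace =
      algebraMap K (AlgebraicClosure K) (g : Matrix (Fin n) (Fin n) K).trace :=
  (AddMonoidHom.map_trace _ _).symm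

variable {Γ : Type} [Group Γ]

theorem IsoOverBar.trace_eq {ρ₁ ρ₂ : Γ →* GLn n K} (h : IsoOverBar ρ₁ ρ₂) (γ : Γ) :
    (ρ₁ γ : Matrix (Fin n) (Fin n) K).trace = (ρ₂ γ : Matrix (Fin n) (Fin n) K).trace := by
  obtain ⟨P, hP⟩ := h
  apply (algebraMap K (AlgebraicClosure K)).injective
  rw [← trace_toBar, ← trace_toBar, hP γ, Units.val_mul, Units.val_mul, Matrix.trace_units_conj]

theorem isoOverBar_of_trace_eq [CharZero K] {ρ₁ ρ₂ : Γ →* GLn n K} (h₁ : SemisimpleRep ρ₁)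
    (h₂ : SemisimpleRep ρ₂)
    (h : ∀ γ, (ρ₁ γ : Matrix (Fin n) (Fin n) K).trace = (ρ₂ γ : Matrix (Fin n) (Fin n) K).trace) :
    IsoOverBar ρ₁ ρ₂ :=
  exists_conj_of_trace_eq (r := toBar.comp ρ₁) (r' := toBar.comp ρ₂) h₁ h₂ fun γ => by
    simp only [MonoidHom.comp_apply, trace_toBar, h γ]

namespace IsCompatibleSystem

variable [TopologicalSpace Γ] {A : Type} {Fr : A → Γ} {E : Type} [Field E] [NumberField E]
  {Λ : Set (Places E)} {ρ ρ' : ∀ v : Places E, Γ →* GLn n (Kv E v)} {X : Set (A × Places E)}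

theorem exists_trace_eq_algebraMap (hcs : IsCompatibleSystem Fr E n Λ ρ X) (α : A) :
    ∃ t : E, ∀ v, (α, v) ∈ X →
      (ρ v (Fr α) : Matrix (Fin n) (Fin n) (Kv E v)).trace = algebraMap E (Kv E v) t := by
  obtain ⟨q, hq⟩ := hcs.charpoly_indep α
  refine ⟨-q.nextCoeff, fun v hv => ?_⟩
  rw [Matrix.trace_eq_neg_charpoly_nextCoeff, hq v hv,
    Polynomial.nextCoeff_map (algebraMap E (Kv E v)).injective, map_neg]

theorem continuous_trace (hcs : IsCompatibleSystem Fr E n Λ ρ X) {v : Places E} (hv : v ∈ Λ) :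
    Continuous fun γ => (ρ v γ : Matrix (Fin n) (Fin n) (Kv E v)).trace :=
  (Units.continuous_val.comp (hcs.continuous v hv)).matrix_trace

theorem trace_eq_of_trace_eq (hcs : IsCompatibleSystem Fr E n Λ ρ X)
    (hcs' : IsCompatibleSystem Fr E n Λ ρ' X) {v₀ v : Places E} (hv₀ : v₀ ∈ Λ) (hv : v ∈ Λ)
    (h₀ : ∀ γ, (ρ v₀ γ : Matrix (Fin n) (Fin n) (Kv E v₀)).trace =
      (ρ' v₀ γ : Matrix (Fin n) (Fin n) (Kv E v₀)).trace) (γ : Γ) :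
    (ρ v γ : Matrix (Fin n) (Fin n) (Kv E v)).trace =
      (ρ' v γ : Matrix (Fin n) (Fin n) (Kv E v)).trace := by
  have hdense := hcs.frob_dense 2 ![v₀, v] (Fin.forall_fin_two.mpr ⟨hv₀, hv⟩)
  refine congrFun ((hcs.continuous_trace hv).ext_on hdense (hcs'.continuous_trace hv) ?_) γ
  rintro _ ⟨α, hα, rfl⟩
  have hαv₀ : (α, v₀) ∈ X := hα 0
  have hαv : (α, v) ∈ X := hα 1
  obtain ⟨t, ht⟩ := hcs.exists_trace_eq_algebraMap α
  obtain ⟨t', ht'⟩ := hcs'.exists_trace_eq_algebraMap α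
  have htt' : t = t' :=
    (algebraMap E (Kv E v₀)).injective (by rw [← ht _ hαv₀, ← ht' _ hαv₀, h₀])
  exact (ht _ hαv).trans (htt' ▸ (ht' _ hαv).symm)

end IsCompatibleSystem

end Paper

theorem isomorphism_propagates_in_compatible_systems_general
    {Γ A : Type} [Group Γ] [TopologicalSpace Γ]
    (Fr : A → Γ)
    (E : Type) [Field E] [NumberField E] (n : ℕ)
    (Λ : Set (Places E))
    (ρ ρ' : ∀ v : Places E, Γ →* GLn n (Kv E v))
    (X : Set (A × Places E))
    (hcs : IsCompatibleSystem Fr E n Λ ρ X)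
    (hcs' : IsCompatibleSystem Fr E n Λ ρ' X)
    (hss : ∀ v ∈ Λ, SemisimpleRep (ρ v))
    (hss' : ∀ v ∈ Λ, SemisimpleRep (ρ' v))
    (v₀ : Places E) (hv₀ : v₀ ∈ Λ)
    (hiso : IsoOverBar (ρ v₀) (ρ' v₀)) :
    ∀ v ∈ Λ, IsoOverBar (ρ v) (ρ' v) := by
  intro v hv
  have : CharZero (Kv E v) := charZero_of_injective_algebraMap (algebraMap E (Kv E v)).injective
  exact isoOverBar_of_trace_eq (hss v hv) (hss' v hv)
    (hcs.trace_eq_of_trace_eq hcs' hv₀ hv hiso.trace_eq)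

/-- Let `(Γ, {F_α})` be a group with Frobenii and let `ℛ = {ρ_λ}` and `ℛ' = {ρ'_λ}` be two
compatible systems of rank `n` semisimple representations of `Γ` defined over a number
field `E`, with a common witnessing set `𝒳 ⊆ A × Λ`.  If `ρ_{λ₀} ≅ ρ'_{λ₀}` for some
`λ₀ ∈ Λ`, then `ρ_λ ≅ ρ'_λ` for every `λ ∈ Λ`. -/
theorem isomorphism_propagates_in_compatible_systems
    {Γ A : Type} [Group Γ] [TopologicalSpace Γ] [IsTopologicalGroup Γ] [CompactSpace Γ]
    [TotallyDisconnectedSpace Γ]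
    (Fr : A → Γ) (hFr : DenseRange Fr)
    (E : Type) [Field E] [NumberField E] (n : ℕ)
    (Λ : Set (Places E)) (hΛ : ResidualDensityOne Λ)
    (ρ ρ' : ∀ v : Places E, Γ →* GLn n (Kv E v))
    (X : Set (A × Places E))
    (hcs : IsCompatibleSystem Fr E n Λ ρ X)
    (hcs' : IsCompatibleSystem Fr E n Λ ρ' X)
    (hss : ∀ v ∈ Λ, SemisimpleRep (ρ v))
    (hss' : ∀ v ∈ Λ, SemisimpleRep (ρ' v))
    (v₀ : Places E) (hv₀ : v₀ ∈ Λ)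
    (hiso : IsoOverBar (ρ v₀) (ρ' v₀)) :
    ∀ v ∈ Λ, IsoOverBar (ρ v) (ρ' v) :=
  isomorphism_propagates_in_compatible_systems_general Fr E n Λ ρ ρ' X hcs hcs' hss hss' v₀ hv₀ hiso
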